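/- Let Q be a quiver and ℵ an infinite cardinal with ℵ ≥ sup{|R|, |V|, |E|}, where V and E are the vertex and edge sets of Q. Then for every representation M of Q and every element x ∈ M(v) for some vertex v, there exists a subrepresentation P ⊆ M such that x ∈ P(v), |P| ≤ ℵ, and P(w) is a pure submodule of M(w) for every vertex w. -/

import Mathlib

/-!
A submodule `A ⊆ N` is pure as soon as every finite linear system with constants in `A` that is
solvable in `N` is already solvable in `A`: by the equational criterion for vanishing of tensors
(after reducing to finitely generated `L`), a tensor in `L ⊗ A` that dies in `L ⊗ N` is a sum
whose trivial-vanishing witness can be moved from `N` into `A`. Starting from `x`, alternately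
adjoin a solution of every such system (at most `ℵ` new elements, as `|R| ≤ ℵ`) and the images
under all arrows (at most `ℵ`, as `|E| ≤ ℵ`), and take the union of the resulting chain: each
system over the union has its constants, hence a solution, at some finite stage.
-/

open CategoryTheory CategoryTheory.Limits

/-- The category of representations of a quiver by `R`-modules. -/
abbrev QRep (V : Type) [Quiver.{0} V] (R : Type) [Ring R] := Paths V ⥤ ModuleCat.{0,0} R

/-- A submodule `A ⊆ B` is pure if `L ⊗ A → L ⊗ B` is injective for every
module `L`. -/
def IsPureSubmodule {R M : Type} [CommRing R] [AddCommGroup M] [Module R M]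
    (A : Submodule R M) : Prop :=
  ∀ (L : Type) [AddCommGroup L] [Module R L],
    Function.Injective (LinearMap.lTensor L A.subtype)

/-- A subrepresentation of a representation `M`: a submodule at each vertex,
stable under the arrow maps. -/
structure Subrep {V : Type} [Quiver.{0} V] {R : Type} [CommRing R] (M : QRep V R) where
  carrier : ∀ v : V, Submodule R (M.obj ((Paths.of V).obj v))
  map_mem : ∀ {v w : V} (a : v ⟶ w) (x), x ∈ carrier v →
    (M.map a.toPath).hom x ∈ carrier w

open TensorProduct LinearMap Function Cardinal

section Tensor

variable {R : Type*} [CommRing R] {M N : Type*} [AddCommGroup M] [Module R M]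
  [AddCommGroup N] [Module R N]

theorem TensorProduct.exists_eq_sum_tmul_of_span_eq_top {ι : Type*} [Fintype ι] {g : ι → M}
    (hg : Submodule.span R (Set.range g) = ⊤) (x : M ⊗[R] N) :
    ∃ b : ι → N, x = ∑ i, g i ⊗ₜ b i := by
  induction x using TensorProduct.induction_on with
  | zero => exact ⟨0, by simp⟩
  | tmul m n =>
    obtain ⟨c, rfl⟩ :=
      (Submodule.mem_span_range_iff_exists_fun R).mp (hg ▸ Submodule.mem_top : m ∈ _)
    exact ⟨fun i => c i • n, by simp [sum_tmul, smul_tmul]⟩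
  | add x y hx hy =>
    obtain ⟨b, rfl⟩ := hx
    obtain ⟨b', rfl⟩ := hy
    exact ⟨b + b', by simp [tmul_add, Finset.sum_add_distrib]⟩

theorem LinearMap.lTensor_injective_of_forall_fg {L : Type*} [AddCommGroup L] [Module R L]
    (f : M →ₗ[R] N) (hf : ∀ Q : Submodule R L, Q.FG → Injective (f.lTensor Q)) :
    Injective (f.lTensor L) := by
  refine (injective_iff_map_eq_zero _).mpr fun x hx => ?_
  obtain ⟨P, hP, t, rfl⟩ := TensorProduct.exists_of_fg x
  rw [← LinearMap.comp_apply, lTensor_comp_rTensor, ← rTensor_comp_lTensor,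
    LinearMap.comp_apply] at hx
  obtain ⟨Q, hPQ, hQ, hQt⟩ := TensorProduct.eq_zero_of_fg_of_subtype_eq_zero hP hx
  rw [← LinearMap.comp_apply, rTensor_comp_lTensor, ← lTensor_comp_rTensor,
    LinearMap.comp_apply] at hQt
  rw [← Submodule.subtype_comp_inclusion _ _ hPQ, rTensor_comp_apply,
    (injective_iff_map_eq_zero _).mp (hf Q hQ) _ hQt, map_zero]

end Tensor

namespace Cardinal

universe u

variable {ℵ : Cardinal.{u}}

theorem mk_prod_le_of_le (hℵ : ℵ₀ ≤ ℵ) {α β : Type u} (hα : #α ≤ ℵ) (hβ : #β ≤ ℵ) :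
    #(α × β) ≤ ℵ := by
  simpa using (mul_le_mul' hα hβ).trans (mul_eq_self hℵ).le

theorem mk_sigma_le_of_le (hℵ : ℵ₀ ≤ ℵ) {ι : Type u} {f : ι → Type u} (hι : #ι ≤ ℵ)
    (hf : ∀ i, #(f i) ≤ ℵ) : #(Σ i, f i) ≤ ℵ := by
  rw [mk_sigma]
  exact (sum_le_mk_mul_iSup _).trans <|
    (mul_le_mul' hι (ciSup_le' hf)).trans (mul_eq_self hℵ).le

theorem mk_iUnion_le_of_le (hℵ : ℵ₀ ≤ ℵ) {α ι : Type u} {f : ι → Set α} (hι : #ι ≤ ℵ)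
    (hf : ∀ i, #(f i) ≤ ℵ) : #(⋃ i, f i) ≤ ℵ :=
  mk_iUnion_le_sum_mk.trans <| (mk_sigma _).symm.trans_le (mk_sigma_le_of_le hℵ hι hf)

theorem mk_fin_arrow_le (hℵ : ℵ₀ ≤ ℵ) {α : Type u} (hα : #α ≤ ℵ) (n : ℕ) :
    #(Fin n → α) ≤ ℵ := by
  simpa using (power_le_power_right hα).trans (power_nat_le (n := n) hℵ)

theorem mk_finsupp_le (hℵ : ℵ₀ ≤ ℵ) {α β : Type u} [Zero β] (hα : #α ≤ ℵ) (hβ : #β ≤ ℵ) :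
    #(α →₀ β) ≤ ℵ :=
  open Classical in
  calc #(α →₀ β) ≤ #(List (α × β)) := (mk_le_of_injective (Finsupp.graph_injective α β)).trans
        (mk_le_of_surjective List.toFinset_surjective)
    _ ≤ ℵ := (mk_list_le_max _).trans <| max_le hℵ <| mk_prod_le_of_le hℵ hα hβ

theorem mk_span_le (hℵ : ℵ₀ ≤ ℵ) {R N : Type u} [CommRing R] [AddCommGroup N] [Module R N]
    (hR : #R ≤ ℵ) {s : Set N} (hs : #s ≤ ℵ) : #(Submodule.span R s) ≤ ℵ := by
  have hspan : Submodule.span R s =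
      LinearMap.range (Finsupp.linearCombination R ((↑) : s → N)) := by
    rw [Finsupp.range_linearCombination, Subtype.range_coe]
  rw [hspan]
  exact (mk_le_of_surjective (LinearMap.surjective_rangeRestrict _)).trans
    (mk_finsupp_le hℵ hs hR)

end Cardinal

section Systems

variable {R N : Type*} [CommRing R] [AddCommGroup N] [Module R N]

variable (R) in
def SystemsSolvableIn (A B : Set N) : Prop :=
  ∀ (n k : ℕ) (r : Fin n → Fin k → R) (a : Fin n → N), (∀ i, a i ∈ A) →
    (∃ m : Fin k → N, ∀ i, a i = ∑ j, r i j • m j) →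
    ∃ b : Fin k → N, (∀ j, b j ∈ B) ∧ ∀ i, a i = ∑ j, r i j • b j

theorem SystemsSolvableIn.mono {A B B' : Set N} (h : SystemsSolvableIn R A B) (hB : B ⊆ B') :
    SystemsSolvableIn R A B' := fun n k r a ha hm =>
  let ⟨b, hbB, hb⟩ := h n k r a ha hm
  ⟨b, fun j => hB (hbB j), hb⟩

theorem SystemsSolvableIn.lTensor_subtype_injective {A : Submodule R N}
    (hA : SystemsSolvableIn R (A : Set N) A) (Q : Type*) [AddCommGroup Q] [Module R Q]
    [Module.Finite R Q] : Injective (A.subtype.lTensor Q) := by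
  obtain ⟨m, g, hg⟩ := Module.Finite.exists_fin (R := R) (M := Q)
  refine (injective_iff_map_eq_zero _).mpr fun x hx => ?_
  obtain ⟨b, rfl⟩ := TensorProduct.exists_eq_sum_tmul_of_span_eq_top hg x
  simp only [map_sum, lTensor_tmul, Submodule.subtype_apply] at hx
  obtain ⟨k, c, y, hy, hc⟩ := vanishesTrivially_of_sum_tmul_eq_zero R hg hx
  obtain ⟨y', hy'A, hy'⟩ := hA m k c (fun i => b i) (fun i => (b i).2) ⟨y, hy⟩
  exact sum_tmul_eq_zero_of_vanishesTrivially R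
    ⟨k, c, fun j => ⟨y' j, hy'A j⟩, fun i => Subtype.ext (by simpa using hy' i), hc⟩

theorem SystemsSolvableIn.isPureSubmodule {R N : Type} [CommRing R] [AddCommGroup N]
    [Module R N] {A : Submodule R N} (hA : SystemsSolvableIn R (A : Set N) A) :
    IsPureSubmodule A :=
  fun _ _ _ => A.subtype.lTensor_injective_of_forall_fg fun Q hQ =>
    have := Module.Finite.iff_fg.mpr hQ
    hA.lTensor_subtype_injective Q

theorem systemsSolvableIn_iSup_of_monotone {B : ℕ → Submodule R N} (hB : Monotone B)
    (h : ∀ n, SystemsSolvableIn R (B n : Set N) (B (n + 1))) :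
    SystemsSolvableIn R ((⨆ n, B n : Submodule R N) : Set N) (⨆ n, B n : Submodule R N) := by
  intro n k r a ha hm
  choose stage hstage using fun i => (Submodule.mem_iSup_of_directed B hB.directed_le).mp (ha i)
  obtain ⟨s, hs⟩ := Finite.exists_le stage
  exact (h s).mono (fun y hy => Submodule.mem_iSup_of_mem (s + 1) hy) n k r a
    (fun i => hB (hs i) (hstage i)) hm

open Classical in
noncomputable def chosenSolution {n k : ℕ} (r : Fin n → Fin k → R) (a : Fin n → N) :
    Fin k → N :=
  if h : ∃ m : Fin k → N, ∀ i, a i = ∑ j, r i j • m j then h.choose else 0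

theorem chosenSolution_spec {n k : ℕ} {r : Fin n → Fin k → R} {a : Fin n → N}
    (h : ∃ m : Fin k → N, ∀ i, a i = ∑ j, r i j • m j) :
    ∀ i, a i = ∑ j, r i j • chosenSolution r a j := by
  rw [chosenSolution, dif_pos h]
  exact h.choose_spec

variable (R) in
noncomputable def solutionSet (A : Set N) : Set N :=
  ⋃ p : Σ n k : ℕ, (Fin n → Fin k → R) × (Fin n → A),
    Set.range (chosenSolution p.2.2.1 ((↑) ∘ p.2.2.2))

theorem systemsSolvableIn_solutionSet (A : Set N) : SystemsSolvableIn R A (solutionSet R A) :=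
  fun n k r a ha hm => ⟨chosenSolution r a,
    fun j => Set.mem_iUnion.mpr ⟨⟨n, k, r, fun i => ⟨a i, ha i⟩⟩, j, rfl⟩, chosenSolution_spec hm⟩

theorem mk_solutionSet_le {R N : Type} [CommRing R] [AddCommGroup N] [Module R N]
    {ℵ : Cardinal.{0}} (hℵ : ℵ₀ ≤ ℵ) (hR : #R ≤ ℵ) {A : Set N} (hA : #A ≤ ℵ) :
    #(solutionSet R A) ≤ ℵ := by
  have hℕ : #ℕ ≤ ℵ := mk_nat.trans_le hℵ
  refine mk_iUnion_le_of_le hℵ ?_ fun _ => (Set.finite_range _).lt_aleph0.le.trans hℵ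
  exact mk_sigma_le_of_le hℵ hℕ fun n => mk_sigma_le_of_le hℵ hℕ fun k =>
    mk_prod_le_of_le hℵ (mk_fin_arrow_le hℵ (mk_fin_arrow_le hℵ hR k) n) (mk_fin_arrow_le hℵ hA n)

end Systems

section Representation

variable {V : Type} [Quiver.{0} V] {R : Type} [CommRing R] (M : QRep V R)

noncomputable def closureStep (A : ∀ w : V, Submodule R (M.obj w)) (w : V) :
    Submodule R (M.obj w) :=
  Submodule.span R (A w ∪ solutionSet R (A w : Set _) ∪
    ⋃ e : Σ u, u ⟶ w, ((A e.1).map (M.map e.2.toPath).hom : Set _))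

noncomputable def closureChain (S : ∀ w : V, Set (M.obj w)) :
    ℕ → ∀ w : V, Submodule R (M.obj w)
  | 0 => fun w => Submodule.span R (S w)
  | n + 1 => closureStep M (closureChain S n)

variable {M}

theorem le_closureStep (A : ∀ w : V, Submodule R (M.obj w)) (w : V) :
    A w ≤ closureStep M A w :=
  fun _ hy => Submodule.subset_span (Or.inl (Or.inl hy))

theorem systemsSolvableIn_closureStep (A : ∀ w : V, Submodule R (M.obj w))
    (w : V) : SystemsSolvableIn R (A w : Set _) (closureStep M A w : Set (M.obj w)) :=
  (systemsSolvableIn_solutionSet _).mono fun _ hy => Submodule.subset_span (Or.inl (Or.inr hy))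

theorem map_mem_closureStep (A : ∀ w : V, Submodule R (M.obj w))
    {u w : V} (e : u ⟶ w) {y : M.obj u} (hy : y ∈ A u) :
    (M.map e.toPath).hom y ∈ closureStep M A w :=
  Submodule.subset_span (Or.inr (Set.mem_iUnion.mpr ⟨⟨u, e⟩, Submodule.mem_map_of_mem hy⟩))

theorem mk_closureStep_le {ℵ : Cardinal.{0}} (hℵ : ℵ₀ ≤ ℵ) (hR : #R ≤ ℵ) (hV : #V ≤ ℵ)
    (hE : #(Σ v : V, Σ w : V, v ⟶ w) ≤ ℵ)
    {A : ∀ w : V, Submodule R (M.obj w)} (hA : ∀ w, #(A w) ≤ ℵ) (w : V) :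
    #(closureStep M A w) ≤ ℵ := by
  have hin : #(Σ u, u ⟶ w) ≤ ℵ := mk_sigma_le_of_le hℵ hV fun u =>
    (mk_le_of_injective (f := fun e : u ⟶ w => (⟨u, w, e⟩ : Σ v : V, Σ w : V, v ⟶ w))
      (sigma_mk_injective.comp sigma_mk_injective)).trans hE
  have harrows :
      #(⋃ e : Σ u, u ⟶ w, ((A e.1).map (M.map e.2.toPath).hom : Set (M.obj w))) ≤ ℵ :=
    mk_iUnion_le_of_le hℵ hin fun e => by
      rw [Submodule.map_coe]
      exact mk_image_le.trans (hA e.1)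
  refine mk_span_le hℵ hR ((mk_union_le _ _).trans ?_)
  refine (add_le_add ((mk_union_le _ _).trans ?_) harrows).trans (add_eq_self hℵ).le
  exact (add_le_add (hA w) (mk_solutionSet_le hℵ hR (hA w))).trans (add_eq_self hℵ).le

variable (M) in
theorem closureChain_monotone (S : ∀ w : V, Set (M.obj w)) (w : V) :
    Monotone fun n => closureChain M S n w :=
  monotone_nat_of_le_succ fun _ => le_closureStep _ w

theorem mk_closureChain_le {ℵ : Cardinal.{0}} (hℵ : ℵ₀ ≤ ℵ) (hR : #R ≤ ℵ) (hV : #V ≤ ℵ)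
    (hE : #(Σ v : V, Σ w : V, v ⟶ w) ≤ ℵ) {S : ∀ w : V, Set (M.obj w)} (hS : ∀ w, #(S w) ≤ ℵ) :
    ∀ n w, #(closureChain M S n w) ≤ ℵ
  | 0, w => mk_span_le hℵ hR (hS w)
  | n + 1, w => mk_closureStep_le hℵ hR hV hE (mk_closureChain_le hℵ hR hV hE hS n) w

variable (M) in
noncomputable def pureClosure (S : ∀ w : V, Set (M.obj w)) : Subrep M where
  carrier w := ⨆ n, closureChain M S n w
  map_mem e y hy := by
    obtain ⟨n, hn⟩ :=
      (Submodule.mem_iSup_of_directed _ (closureChain_monotone M S _).directed_le).mp hy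
    exact Submodule.mem_iSup_of_mem (n + 1) (map_mem_closureStep _ e hn)

theorem mem_pureClosure_of_mem {S : ∀ w : V, Set (M.obj w)} {w : V} {y : M.obj w}
    (hy : y ∈ S w) : y ∈ (pureClosure M S).carrier w :=
  Submodule.mem_iSup_of_mem 0 (Submodule.subset_span hy)

theorem isPureSubmodule_pureClosure (S : ∀ w : V, Set (M.obj w)) (w : V) :
    IsPureSubmodule ((pureClosure M S).carrier w) :=
  (systemsSolvableIn_iSup_of_monotone (closureChain_monotone M S w)
    fun _ => systemsSolvableIn_closureStep _ w).isPureSubmodule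

theorem mk_pureClosure_le {ℵ : Cardinal.{0}} (hℵ : ℵ₀ ≤ ℵ) (hR : #R ≤ ℵ) (hV : #V ≤ ℵ)
    (hE : #(Σ v : V, Σ w : V, v ⟶ w) ≤ ℵ) {S : ∀ w : V, Set (M.obj w)} (hS : ∀ w, #(S w) ≤ ℵ) :
    #(Σ w : V, (pureClosure M S).carrier w) ≤ ℵ := by
  refine mk_sigma_le_of_le hℵ hV fun w => ?_
  change #((⨆ n, closureChain M S n w : Submodule R (M.obj w)) : Set (M.obj w)) ≤ ℵ
  rw [Submodule.coe_iSup_of_directed _ (closureChain_monotone M S w).directed_le]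
  exact mk_iUnion_le_of_le hℵ (mk_nat.trans_le hℵ) (mk_closureChain_le hℵ hR hV hE hS · w)

end Representation

/-- Let `ℵ` be an infinite cardinal with `ℵ ≥ sup{|R|, |V|, |E|}`.
Then for every representation `M` of the quiver and every `x ∈ M(v)`, there is a
subrepresentation `P ⊆ M` with `x ∈ P(v)`, `|P| ≤ ℵ`, and `P(w)` a pure
submodule of `M(w)` for every vertex `w`. -/
theorem stmt14 {V : Type} [Quiver.{0} V] {R : Type} [CommRing R]
    (ℵ : Cardinal.{0}) (hℵ : Cardinal.aleph0 ≤ ℵ)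
    (hR : Cardinal.mk R ≤ ℵ) (hV : Cardinal.mk V ≤ ℵ)
    (hE : Cardinal.mk (Σ v : V, Σ w : V, v ⟶ w) ≤ ℵ)
    (M : QRep V R) (v : V) (x : M.obj ((Paths.of V).obj v)) :
    ∃ P : Subrep M, x ∈ P.carrier v ∧
      Cardinal.mk (Σ w : V, P.carrier w) ≤ ℵ ∧
      ∀ w : V, IsPureSubmodule (P.carrier w) := by
  -- `{y | HEq x y}` is `{x}` at the vertex `v` and empty at every other vertex.
  let S : ∀ w : V, Set (M.obj w) := fun _ => {y | HEq x y}
  have hS : ∀ w, #(S w) ≤ ℵ := fun _ =>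
    (mk_le_one_iff_set_subsingleton.mpr fun _ hy _ hz => eq_of_heq (hy.symm.trans hz)).trans
      (one_le_aleph0.trans hℵ)
  exact ⟨pureClosure M S, mem_pureClosure_of_mem (S := S) HEq.rfl,
    mk_pureClosure_le hℵ hR hV hE hS, isPureSubmodule_pureClosure S⟩
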